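/- Let P be a maximal ranked poset of rank n and let J ⊆ K be nonempty distinct poset ideals of P such that J, K, and K ∖ J are each connected in P, and suppose |max(J)| = 1 and |max(K)| ≥ 2, with max(J) ⊆ P_j and max(K) ⊆ P_k where k − j = 1. Then min(K ∖ J) = P_{k−1} ∖ max(J), the sets P_{k−1}, min(K ∖ J), max(K) are pairwise distinct antichains, and the triple {P_{k−1}, min(K ∖ J), max(K)} belongs to Δ*_C(P), where min(W) denotes the set of minimal elements of a subset W of P. -/

import Mathlib

open Finset
open scoped Classical

variable (P : Type*) [Fintype P] [PartialOrder P]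

/-- The comparability graph of a poset. -/
def compGraph : SimpleGraph P where
  Adj x y := x ≠ y ∧ (x ≤ y ∨ y ≤ x)
  symm := ⟨fun _ _ h => ⟨h.1.symm, h.2.symm⟩⟩
  loopless := ⟨fun _ h => h.1 rfl⟩

/-- A subset `W` of `P` is connected in `P` if the subgraph of the comparability
graph induced on `W` is connected (this includes `W` being nonempty). -/
def ConnIn (W : Set P) : Prop :=
  (SimpleGraph.induce W (compGraph P)).Connected

/-- A poset ideal (down-set). -/
def IsIdealF (I : Finset P) : Prop :=
  ∀ ⦃x y : P⦄, x ∈ I → y ≤ x → y ∈ I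

/-- An antichain of the poset. -/
def IsAntichainF (A : Finset P) : Prop :=
  IsAntichain (· ≤ ·) (↑A : Set P)

/-- The 0/1 indicator vector of a subset of `P`. -/
noncomputable def rho (W : Finset P) : P → ℝ :=
  fun x => if x ∈ W then 1 else 0

/-- The order polytope of `P`. -/
def orderPolytope : Set (P → ℝ) :=
  {f | (∀ x, 0 ≤ f x ∧ f x ≤ 1) ∧ ∀ ⦃x y : P⦄, x ≤ y → f y ≤ f x}

/-- The chain polytope of `P`. -/
def chainPolytope : Set (P → ℝ) :=
  {f | (∀ x, 0 ≤ f x) ∧ ∀ s : Finset P, IsChain (· ≤ ·) (↑s : Set P) → ∑ x ∈ s, f x ≤ 1}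

/-- `conv {u, v}` is an edge (1-dimensional exposed face) of the polytope `S`. -/
def IsEdgeOf (S : Set (P → ℝ)) (u v : P → ℝ) : Prop :=
  u ≠ v ∧ IsExposed ℝ S (convexHull ℝ {u, v})

/-- `conv {u, v, w}` is a triangular 2-face of the polytope `S`. -/
def IsTriFaceOf (S : Set (P → ℝ)) (u v w : P → ℝ) : Prop :=
  u ≠ v ∧ u ≠ w ∧ v ≠ w ∧ IsExposed ℝ S (convexHull ℝ {u, v, w})

/-- The set of maximal elements of a subset of `P`. -/
noncomputable def maxSet (W : Finset P) : Finset P :=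
  W.filter (fun x => ∀ y ∈ W, ¬ x < y)

/-- The set of minimal elements of a subset of `P`. -/
noncomputable def minSet (W : Finset P) : Finset P :=
  W.filter (fun x => ∀ y ∈ W, ¬ y < x)

/-- The poset ideal generated by a subset of `P`. -/
noncomputable def genIdeal (A : Finset P) : Finset P :=
  univ.filter (fun x => ∃ a ∈ A, x ≤ a)

/-- The pair `{I, J}` belongs to `E*_O(P)`. -/
noncomputable def EstarO (I J : Finset P) : Prop :=
  IsIdealF P I ∧ IsIdealF P J ∧ I ≠ J ∧
    IsEdgeOf P (orderPolytope P) (rho P I) (rho P J) ∧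
    ¬ IsEdgeOf P (chainPolytope P) (rho P (maxSet P I)) (rho P (maxSet P J))

/-- The pair `{A, B}` belongs to `E*_C(P)`. -/
noncomputable def EstarC (A B : Finset P) : Prop :=
  IsAntichainF P A ∧ IsAntichainF P B ∧ A ≠ B ∧
    IsEdgeOf P (chainPolytope P) (rho P A) (rho P B) ∧
    ¬ IsEdgeOf P (orderPolytope P) (rho P (genIdeal P A)) (rho P (genIdeal P B))

/-- `Δ_O(P)`: unordered triples of pairwise distinct poset ideals spanning a
triangular 2-face of the order polytope. -/
def DeltaO : Set (Finset (Finset P)) :=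
  {T | ∃ I J K : Finset P, T = {I, J, K} ∧ I ≠ J ∧ I ≠ K ∧ J ≠ K ∧
    IsIdealF P I ∧ IsIdealF P J ∧ IsIdealF P K ∧
    IsTriFaceOf P (orderPolytope P) (rho P I) (rho P J) (rho P K)}

/-- `Δ_C(P)`: unordered triples of pairwise distinct antichains spanning a
triangular 2-face of the chain polytope. -/
def DeltaC : Set (Finset (Finset P)) :=
  {T | ∃ A B C : Finset P, T = {A, B, C} ∧ A ≠ B ∧ A ≠ C ∧ B ≠ C ∧
    IsAntichainF P A ∧ IsAntichainF P B ∧ IsAntichainF P C ∧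
    IsTriFaceOf P (chainPolytope P) (rho P A) (rho P B) (rho P C)}

/-- `Δ*_O(P)`: triples in `Δ_O(P)` at least one of whose pairs lies in `E*_O(P)`. -/
def DeltaStarO : Set (Finset (Finset P)) :=
  {T | T ∈ DeltaO P ∧ ∃ I ∈ T, ∃ J ∈ T, I ≠ J ∧ EstarO P I J}

/-- `Δ*_C(P)`: triples in `Δ_C(P)` at least one of whose pairs lies in `E*_C(P)`. -/
def DeltaStarC : Set (Finset (Finset P)) :=
  {T | T ∈ DeltaC P ∧ ∃ A ∈ T, ∃ B ∈ T, A ≠ B ∧ EstarC P A B}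

/-- `r` is a rank function exhibiting `P` as a maximal ranked poset of rank `n`:
`r` is surjective onto `{0, …, n}` and `x < y ↔ r x < r y`. -/
def IsMaxRanked (r : P → ℕ) (n : ℕ) : Prop :=
  (∀ x, r x ≤ n) ∧ (∀ i, i ≤ n → ∃ x, r x = i) ∧ (∀ x y : P, x < y ↔ r x < r y)

/-- The rank level `P_i`. -/
noncomputable def level (r : P → ℕ) (i : ℕ) : Finset P :=
  univ.filter (fun x => r x = i)

/-- `P` contains an `X`-poset as a subposet. -/
def ContainsX : Prop :=
  ∃ a b c d e : P,
    a ≠ b ∧ a ≠ c ∧ a ≠ d ∧ a ≠ e ∧ b ≠ c ∧ b ≠ d ∧ b ≠ e ∧ c ≠ d ∧ c ≠ e ∧ d ≠ e ∧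
    a < c ∧ b < c ∧ c < d ∧ c < e ∧ ¬ a ≤ b ∧ ¬ b ≤ a ∧ ¬ d ≤ e ∧ ¬ e ≤ d

/-!
In a maximal ranked poset, `J` is the principal ideal of its top element `a` and `K` consists of
`M = max K` together with everything of rank `< k`, so `K \ J = (P_{k-1} \ {a}) ∪ M`. Since `M` is
an antichain with at least two elements, connectivity of `K \ J` forces `B = P_{k-1} \ {a}` to be
nonempty, and `B` is then the set of minimal elements.

Every element of `L = P_{k-1}` lies below every element of `M`. On the chain polytope the linear
functional `f ↦ ∑_{b ∈ B, m ∈ M} (f b + f m) - ∑_{x ∉ L ∪ M} f x` is bounded by `|B| |M|`, with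
equality exactly when `f` vanishes off `L ∪ M` and `f b + f m = 1` for all `b ∈ B`, `m ∈ M`. For
`B = L` this face is the segment `[ρ L, ρ M]`, and for `B = L \ {a}` it is the triangle
`ρ L, ρ B, ρ M`. On the order polytope `⟨M⟩ = ⟨L⟩ ∪ M`, and the midpoint of `ρ ⟨L⟩` and `ρ ⟨M⟩` is
also the midpoint of `ρ (⟨L⟩ ∪ {m₁})` and `ρ (⟨M⟩ \ {m₁})`, so `{⟨L⟩, ⟨M⟩}` is not an edge there.
-/

section Indicator

variable {P : Type*} {B M R : Finset P}

theorem rho_injective : Function.Injective (rho P) := by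
  intro S T h
  ext x
  have hx := congrFun h x
  by_cases hS : x ∈ S <;> by_cases hT : x ∈ T <;> simp_all [rho]

theorem rho_add_rho (S T : Finset P) :
    rho P S + rho P T = rho P (S ∪ T) + rho P (S ∩ T) := by
  funext x
  by_cases hS : x ∈ S <;> by_cases hT : x ∈ T <;> simp [rho, hS, hT]

def pairFunctional (B M R : Finset P) : StrongDual ℝ (P → ℝ) :=
  let π (x : P) : StrongDual ℝ (P → ℝ) := ContinuousLinearMap.proj x
  ∑ b ∈ B, ∑ m ∈ M, (π b + π m) - ∑ x ∈ R, π x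

theorem pairFunctional_apply (f : P → ℝ) :
    pairFunctional B M R f = ∑ b ∈ B, ∑ m ∈ M, (f b + f m) - ∑ x ∈ R, f x := by
  simp [pairFunctional]

end Indicator

section Polytopes

variable {P : Type*} [PartialOrder P]

theorem rho_mem_chainPolytope {A : Finset P} (hA : IsAntichainF P A) :
    rho P A ∈ chainPolytope P := by
  refine ⟨fun x => by unfold rho; split_ifs <;> norm_num, fun s hs => ?_⟩
  have hcard : #(s ∩ A) ≤ 1 := by
    rw [card_le_one_iff_subsingleton, coe_inter]
    exact inter_subsingleton_of_isChain_of_isAntichain hs hA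
  simpa [rho, sum_boole] using hcard

theorem rho_mem_orderPolytope {I : Finset P} (hI : IsIdealF P I) :
    rho P I ∈ orderPolytope P := by
  refine ⟨fun x => by unfold rho; split_ifs <;> norm_num, fun x y hxy => ?_⟩
  by_cases hy : y ∈ I
  · simp [rho, hy, hI hy hxy]
  · simp only [rho, hy, if_false]
    split_ifs <;> norm_num

theorem convex_chainPolytope : Convex ℝ (chainPolytope P) := by
  intro f hf g hg a b ha hb hab
  refine ⟨fun x => add_nonneg (mul_nonneg ha (hf.1 x)) (mul_nonneg hb (hg.1 x)), fun s hs => ?_⟩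
  have h := add_le_add (mul_le_mul_of_nonneg_left (hf.2 s hs) ha)
    (mul_le_mul_of_nonneg_left (hg.2 s hs) hb)
  simpa [sum_add_distrib, ← mul_sum, hab] using h

theorem add_le_one_of_mem_chainPolytope {f : P → ℝ} (hf : f ∈ chainPolytope P) {x y : P}
    (hxy : x < y) : f x + f y ≤ 1 := by
  have hchain : IsChain (· ≤ ·) (↑({x, y} : Finset P) : Set P) := by
    rw [coe_pair]
    exact IsChain.pair hxy.le
  simpa [sum_pair hxy.ne] using hf.2 _ hchain

theorem IsAntichainF.mono {S T : Finset P} (hT : IsAntichainF P T) (h : S ⊆ T) :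
    IsAntichainF P S :=
  IsAntichain.subset hT (coe_subset.2 h)

theorem disjoint_of_forall_lt {S T : Finset P} (h : ∀ s ∈ S, ∀ t ∈ T, s < t) : Disjoint S T :=
  disjoint_left.2 fun x hS hT => lt_irrefl x (h x hS x hT)

theorem ne_of_forall_lt {S T : Finset P} (hS : S.Nonempty) (h : ∀ s ∈ S, ∀ t ∈ T, s < t) :
    S ≠ T := by
  rintro rfl
  obtain ⟨s, hs⟩ := hS
  exact lt_irrefl s (h s hs s hs)

end Polytopes

section ChainFaces

variable {P : Type*} [PartialOrder P] {B M R : Finset P}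

theorem sum_sum_add_le_card_mul {f : P → ℝ} (hf : f ∈ chainPolytope P)
    (hBM : ∀ b ∈ B, ∀ m ∈ M, b < m) : ∑ b ∈ B, ∑ m ∈ M, (f b + f m) ≤ #B * #M := by
  have h := sum_le_sum fun b hb => sum_le_sum fun m hm =>
    add_le_one_of_mem_chainPolytope hf (hBM b hb m hm)
  simpa using h

theorem pairFunctional_le {f : P → ℝ} (hf : f ∈ chainPolytope P)
    (hBM : ∀ b ∈ B, ∀ m ∈ M, b < m) : pairFunctional B M R f ≤ #B * #M := by
  rw [pairFunctional_apply]
  linarith [sum_sum_add_le_card_mul hf hBM, sum_nonneg fun x (_ : x ∈ R) => hf.1 x]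

theorem pairFunctional_eq_iff {f : P → ℝ} (hf : f ∈ chainPolytope P)
    (hBM : ∀ b ∈ B, ∀ m ∈ M, b < m) :
    pairFunctional B M R f = #B * #M ↔
      (∀ b ∈ B, ∀ m ∈ M, f b + f m = 1) ∧ ∀ x ∈ R, f x = 0 := by
  have hpair : ∀ b ∈ B, ∀ m ∈ M, f b + f m ≤ 1 := fun b hb m hm =>
    add_le_one_of_mem_chainPolytope hf (hBM b hb m hm)
  have hpairs_eq : ∑ b ∈ B, ∑ m ∈ M, (f b + f m) = #B * #M ↔
      ∀ b ∈ B, ∀ m ∈ M, f b + f m = 1 := by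
    rw [show (#B * #M : ℝ) = ∑ b ∈ B, ∑ m ∈ M, (1 : ℝ) by simp,
      sum_eq_sum_iff_of_le fun b hb => sum_le_sum (hpair b hb)]
    exact forall₂_congr fun b hb => sum_eq_sum_iff_of_le (hpair b hb)
  have hpairs := sum_sum_add_le_card_mul hf hBM
  have hR : 0 ≤ ∑ x ∈ R, f x := sum_nonneg fun x _ => hf.1 x
  rw [pairFunctional_apply, ← hpairs_eq, ← sum_eq_zero_iff_of_nonneg fun x _ => hf.1 x]
  constructor
  · intro h
    constructor <;> linarith
  · rintro ⟨h₁, h₂⟩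
    linarith

def chainPairFace (B M R : Finset P) : Set (P → ℝ) :=
  {f ∈ chainPolytope P | (∀ b ∈ B, ∀ m ∈ M, f b + f m = 1) ∧ ∀ x ∈ R, f x = 0}

theorem isExposed_chainPairFace (hBM : ∀ b ∈ B, ∀ m ∈ M, b < m) :
    IsExposed ℝ (chainPolytope P) (chainPairFace B M R) := by
  rintro ⟨f₀, hf₀, hf₀_eq⟩
  have hf₀_val := (pairFunctional_eq_iff hf₀ hBM).2 hf₀_eq
  refine ⟨pairFunctional B M R, Set.ext fun f => ⟨?_, ?_⟩⟩
  · rintro ⟨hf, hf_eq⟩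
    have hf_val := (pairFunctional_eq_iff hf hBM).2 hf_eq
    exact ⟨hf, fun g hg => hf_val ▸ pairFunctional_le hg hBM⟩
  · rintro ⟨hf, hmax⟩
    exact ⟨hf, (pairFunctional_eq_iff hf hBM).1
      ((pairFunctional_le hf hBM).antisymm (hf₀_val ▸ hmax f₀ hf₀))⟩

theorem convex_chainPairFace (hBM : ∀ b ∈ B, ∀ m ∈ M, b < m) :
    Convex ℝ (chainPairFace B M R) :=
  (isExposed_chainPairFace hBM).convex convex_chainPolytope

theorem rho_mem_chainPairFace {S : Finset P} (hS : IsAntichainF P S)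
    (hBM : ∀ b ∈ B, ∀ m ∈ M, (b ∈ S ↔ m ∉ S)) (hR : Disjoint R S) :
    rho P S ∈ chainPairFace B M R := by
  refine ⟨rho_mem_chainPolytope hS, fun b hb m hm => ?_, fun x hx => ?_⟩
  · have := hBM b hb m hm
    by_cases hbS : b ∈ S <;> simp_all [rho]
  · simp [rho, disjoint_left.1 hR hx]

theorem eq_of_mem_chainPairFace {f : P → ℝ} (hf : f ∈ chainPairFace B M R) {b₀ m₀ : P}
    (hb₀ : b₀ ∈ B) (hm₀ : m₀ ∈ M) :
    (∀ b ∈ B, f b = f b₀) ∧ ∀ m ∈ M, f m = 1 - f b₀ := by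
  have h := hf.2.1
  exact ⟨fun b hb => by linarith [h b hb m₀ hm₀, h b₀ hb₀ m₀ hm₀],
    fun m hm => by linarith [h b₀ hb₀ m hm]⟩

end ChainFaces

theorem smul_add_smul_add_smul_mem_convexHull {E : Type*} [AddCommGroup E] [Module ℝ E]
    {u v w : E} {α β γ : ℝ} (hα : 0 ≤ α) (hβ : 0 ≤ β) (hγ : 0 ≤ γ) (hsum : α + β + γ = 1) :
    α • u + β • v + γ • w ∈ convexHull ℝ {u, v, w} := by
  have h := (convex_convexHull ℝ ({u, v, w} : Set E)).sum_mem (t := univ) (w := ![α, β, γ])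
    (z := ![u, v, w]) (by simp [Fin.forall_fin_succ, hα, hβ, hγ])
    (by simp [Fin.sum_univ_three, hsum])
    (fun i _ => subset_convexHull ℝ _ (by fin_cases i <;> simp))
  simpa [Fin.sum_univ_three] using h

section LowDimensionalFaces

variable {P : Type*} [Fintype P] [PartialOrder P] {L M : Finset P}

theorem chainPairFace_eq_segment (hL : IsAntichainF P L) (hM : IsAntichainF P M)
    (hLne : L.Nonempty) (hMne : M.Nonempty) (hLM : ∀ l ∈ L, ∀ m ∈ M, l < m) :
    chainPairFace L M (L ∪ M)ᶜ = convexHull ℝ {rho P L, rho P M} := by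
  have hdisj := disjoint_of_forall_lt hLM
  refine subset_antisymm (fun f hf => ?_) (convexHull_min ?_ (convex_chainPairFace hLM))
  · obtain ⟨l₀, hl₀⟩ := hLne
    obtain ⟨m₀, hm₀⟩ := hMne
    obtain ⟨hfL, hfM⟩ := eq_of_mem_chainPairFace hf hl₀ hm₀
    have hf₀ : ∀ x ∉ L ∪ M, f x = 0 := fun x hx => hf.2.2 x (mem_compl.2 hx)
    rw [convexHull_pair]
    refine ⟨f l₀, 1 - f l₀, hf.1.1 l₀, by linarith [hf.1.1 m₀, hfM m₀ hm₀], by ring, ?_⟩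
    funext x
    by_cases hxL : x ∈ L
    · simp [rho, hxL, disjoint_left.1 hdisj hxL, hfL x hxL]
    by_cases hxM : x ∈ M
    · simp [rho, hxL, hxM, hfM x hxM]
    · simp [rho, hxL, hxM, hf₀ x (by simp [hxL, hxM])]
  · rintro _ (rfl | rfl)
    · refine rho_mem_chainPairFace hL (fun l hl m hm => ?_)
        (disjoint_compl_left.mono_right subset_union_left)
      simp [hl, disjoint_right.1 hdisj hm]
    · refine rho_mem_chainPairFace hM (fun l hl m hm => ?_)
        (disjoint_compl_left.mono_right subset_union_right)
      simp [hm, disjoint_left.1 hdisj hl]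

theorem chainPairFace_eq_triangle {a : P} (ha : a ∈ L) (hL : IsAntichainF P L)
    (hM : IsAntichainF P M) (hB : (L.erase a).Nonempty) (hMne : M.Nonempty)
    (hLM : ∀ l ∈ L, ∀ m ∈ M, l < m) :
    chainPairFace (L.erase a) M (L ∪ M)ᶜ =
      convexHull ℝ {rho P L, rho P (L.erase a), rho P M} := by
  have hBM : ∀ b ∈ L.erase a, ∀ m ∈ M, b < m := fun b hb => hLM b (mem_of_mem_erase hb)
  have hdisj := disjoint_of_forall_lt hLM
  refine subset_antisymm (fun f hf => ?_) (convexHull_min ?_ (convex_chainPairFace hBM))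
  · obtain ⟨b₀, hb₀⟩ := hB
    obtain ⟨m₀, hm₀⟩ := hMne
    obtain ⟨hfB, hfM⟩ := eq_of_mem_chainPairFace hf hb₀ hm₀
    have hf₀ : ∀ x ∉ L ∪ M, f x = 0 := fun x hx => hf.2.2 x (mem_compl.2 hx)
    have hfa : f a ≤ f b₀ := by
      linarith [add_le_one_of_mem_chainPolytope hf.1 (hLM a ha m₀ hm₀), hfM m₀ hm₀]
    have hfb₀ : f b₀ ≤ 1 := by linarith [hf.1.1 m₀, hfM m₀ hm₀]
    convert smul_add_smul_add_smul_mem_convexHull (u := rho P L) (v := rho P (L.erase a))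
      (w := rho P M) (hf.1.1 a) (sub_nonneg.2 hfa) (sub_nonneg.2 hfb₀) (by ring)
    funext x
    by_cases hxa : x = a
    · subst hxa
      simp [rho, ha, disjoint_left.1 hdisj ha]
    by_cases hxL : x ∈ L
    · simp [rho, hxL, hxa, disjoint_left.1 hdisj hxL, hfB x (mem_erase.2 ⟨hxa, hxL⟩)]
    by_cases hxM : x ∈ M
    · simp [rho, hxL, hxM, hfM x hxM]
    · simp [rho, hxL, hxM, hf₀ x (by simp [hxL, hxM])]
  · rintro _ (rfl | rfl | rfl)
    · refine rho_mem_chainPairFace hL (fun b hb m hm => ?_)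
        (disjoint_compl_left.mono_right subset_union_left)
      simp [mem_of_mem_erase hb, disjoint_right.1 hdisj hm]
    · refine rho_mem_chainPairFace (hL.mono (erase_subset a L))
        (fun b hb m hm => ?_)
        (disjoint_compl_left.mono_right ((erase_subset a L).trans subset_union_left))
      simp [hb, disjoint_right.1 hdisj hm]
    · refine rho_mem_chainPairFace hM (fun b hb m hm => ?_)
        (disjoint_compl_left.mono_right subset_union_right)
      simp [hm, disjoint_left.1 hdisj (mem_of_mem_erase hb)]

end LowDimensionalFaces

section OrderPolytope

variable {P : Type*} [PartialOrder P]

theorem isIdealF_union {I S : Finset P} (hI : IsIdealF P I) (hS : ∀ s ∈ S, ∀ y < s, y ∈ I) :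
    IsIdealF P (I ∪ S) := by
  intro x y hx hyx
  rcases mem_union.1 hx with hx | hx
  · exact mem_union_left _ (hI hx hyx)
  · rcases hyx.eq_or_lt with rfl | hlt
    · exact mem_union_right _ hx
    · exact mem_union_left _ (hS x hx y hlt)

theorem not_isExposed_orderPolytope_segment {I M : Finset P} (hI : IsIdealF P I)
    (hM : ∀ m ∈ M, ∀ y < m, y ∈ I) (hIM : Disjoint I M) (hM2 : 1 < #M) :
    ¬ IsExposed ℝ (orderPolytope P) (convexHull ℝ {rho P I, rho P (I ∪ M)}) := by
  intro hexp
  obtain ⟨m₁, hm₁, m₂, hm₂, hne⟩ := one_lt_card.1 hM2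
  have hideal : ∀ S ⊆ M, rho P (I ∪ S) ∈ orderPolytope P := fun S hS =>
    rho_mem_orderPolytope (isIdealF_union hI fun s hs => hM s (hS hs))
  have hsplit : rho P (I ∪ {m₁}) + rho P (I ∪ M.erase m₁) = rho P I + rho P (I ∪ M) := by
    rw [rho_add_rho, add_comm]
    congr 2 <;> ext x <;> grind [disjoint_left]
  have hmid : (1 / 2 : ℝ) • rho P I + (1 / 2 : ℝ) • rho P (I ∪ M) ∈
      openSegment ℝ (rho P (I ∪ {m₁})) (rho P (I ∪ M.erase m₁)) :=
    ⟨1 / 2, 1 / 2, by norm_num, by norm_num, by norm_num, by rw [← smul_add, hsplit, smul_add]⟩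
  have hmid_mem : (1 / 2 : ℝ) • rho P I + (1 / 2 : ℝ) • rho P (I ∪ M) ∈
      convexHull ℝ {rho P I, rho P (I ∪ M)} := by
    rw [convexHull_pair]
    exact ⟨1 / 2, 1 / 2, by norm_num, by norm_num, by norm_num, rfl⟩
  have hmem := hexp.isExtreme.left_mem_of_mem_openSegment
    (hideal _ (singleton_subset_iff.2 hm₁)) (hideal _ (erase_subset m₁ M)) hmid_mem hmid
  rw [convexHull_pair] at hmem
  obtain ⟨p, q, -, -, -, hpq⟩ := hmem
  have h₁ := congrFun hpq m₁
  have h₂ := congrFun hpq m₂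
  simp [rho, disjoint_right.1 hIM hm₁, disjoint_right.1 hIM hm₂, hm₁, hm₂, hne.symm] at h₁ h₂
  linarith

end OrderPolytope

section DeltaStar

variable {P : Type*} [Fintype P] [PartialOrder P] {L M : Finset P}

theorem isIdealF_genIdeal (A : Finset P) : IsIdealF P (genIdeal P A) := by
  intro x y hx hyx
  obtain ⟨a, ha, hxa⟩ := (mem_filter.1 hx).2
  exact mem_filter.2 ⟨mem_univ y, a, ha, hyx.trans hxa⟩

theorem genIdeal_eq_union (hMne : M.Nonempty) (hLM : ∀ l ∈ L, ∀ m ∈ M, l < m)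
    (hcover : ∀ m ∈ M, ∀ y < m, ∃ l ∈ L, y ≤ l) :
    genIdeal P M = genIdeal P L ∪ M := by
  obtain ⟨m₀, hm₀⟩ := hMne
  ext x
  simp only [genIdeal, mem_union, mem_filter, mem_univ, true_and]
  constructor
  · rintro ⟨m, hm, hxm⟩
    rcases hxm.eq_or_lt with rfl | hlt
    · exact Or.inr hm
    · exact Or.inl (hcover m hm x hlt)
  · rintro (⟨l, hl, hxl⟩ | hx)
    · exact ⟨m₀, hm₀, hxl.trans (hLM l hl m₀ hm₀).le⟩
    · exact ⟨x, hx, le_rfl⟩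

theorem disjoint_genIdeal_of_forall_lt (hLM : ∀ l ∈ L, ∀ m ∈ M, l < m) :
    Disjoint (genIdeal P L) M := by
  refine disjoint_left.2 fun x hx hxM => ?_
  obtain ⟨l, hl, hxl⟩ := (mem_filter.1 hx).2
  exact (hLM l hl x hxM).not_ge hxl

theorem mem_DeltaStarC_of_forall_lt {a : P} (ha : a ∈ L) (hB : (L.erase a).Nonempty)
    (hL : IsAntichainF P L) (hM : IsAntichainF P M) (hM2 : 1 < #M)
    (hLM : ∀ l ∈ L, ∀ m ∈ M, l < m) (hcover : ∀ m ∈ M, ∀ y < m, ∃ l ∈ L, y ≤ l) :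
    ({L, L.erase a, M} : Finset (Finset P)) ∈ DeltaStarC P := by
  have hMne : M.Nonempty := card_pos.1 (by omega)
  have hBM : ∀ b ∈ L.erase a, ∀ m ∈ M, b < m := fun b hb => hLM b (mem_of_mem_erase hb)
  have hLB : L ≠ L.erase a := (erase_ne_self.2 ha).symm
  have hLM_ne : L ≠ M := ne_of_forall_lt ⟨a, ha⟩ hLM
  have hBM_ne : L.erase a ≠ M := ne_of_forall_lt hB hBM
  have htri : IsExposed ℝ (chainPolytope P)
      (convexHull ℝ {rho P L, rho P (L.erase a), rho P M}) :=
    chainPairFace_eq_triangle ha hL hM hB hMne hLM ▸ isExposed_chainPairFace hBM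
  have hedge : IsExposed ℝ (chainPolytope P) (convexHull ℝ {rho P L, rho P M}) :=
    chainPairFace_eq_segment hL hM ⟨a, ha⟩ hMne hLM ▸ isExposed_chainPairFace hLM
  have hnot_edge :
      ¬ IsEdgeOf P (orderPolytope P) (rho P (genIdeal P L)) (rho P (genIdeal P M)) := by
    rw [genIdeal_eq_union hMne hLM hcover]
    exact fun h => not_isExposed_orderPolytope_segment (isIdealF_genIdeal L)
      (fun m hm y hy => mem_filter.2 ⟨mem_univ y, hcover m hm y hy⟩)
      (disjoint_genIdeal_of_forall_lt hLM) hM2 h.2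
  refine ⟨⟨L, L.erase a, M, rfl, hLB, hLM_ne, hBM_ne, hL,
      hL.mono (erase_subset a L), hM, rho_injective.ne hLB,
      rho_injective.ne hLM_ne, rho_injective.ne hBM_ne, htri⟩,
    L, by simp, M, by simp, hLM_ne, hL, hM, hLM_ne, ⟨rho_injective.ne hLM_ne, hedge⟩, hnot_edge⟩

end DeltaStar

section Connected

variable {P : Type*} [PartialOrder P]

theorem exists_comparable_of_connIn {W : Set P} (hW : ConnIn P W) {x y : P} (hx : x ∈ W)
    (hy : y ∈ W) (hxy : x ≠ y) : ∃ z ∈ W, z ≠ x ∧ (x ≤ z ∨ z ≤ x) := by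
  have : Nontrivial W := ⟨⟨x, hx⟩, ⟨y, hy⟩, by simpa using hxy⟩
  obtain ⟨z, hz⟩ := hW.preconnected.exists_adj_of_nontrivial ⟨x, hx⟩
  exact ⟨z, z.2, hz.1.symm, hz.2⟩

theorem nonempty_of_connIn_union {B M : Finset P} (hW : ConnIn P ↑(B ∪ M))
    (hM : IsAntichainF P M) (hM2 : 1 < #M) : B.Nonempty := by
  obtain ⟨m₁, hm₁, m₂, hm₂, hne⟩ := one_lt_card.1 hM2
  obtain ⟨z, hz, hzm, hcomp⟩ :=
    exists_comparable_of_connIn hW (by simp [hm₁]) (by simp [hm₂]) hne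
  rcases mem_union.1 (mem_coe.1 hz) with hzB | hzM
  · exact ⟨z, hzB⟩
  · exact (hcomp.elim (hM hm₁ hzM hzm.symm) (hM hzM hm₁ hzm)).elim

end Connected

section Extremal

variable {P : Type*} [Fintype P] [PartialOrder P]

theorem exists_le_mem_maxSet {W : Finset P} {x : P} (hx : x ∈ W) :
    ∃ y ∈ maxSet P W, x ≤ y := by
  obtain ⟨y, hxy, hy⟩ := W.exists_le_maximal hx
  exact ⟨y, mem_filter.2 ⟨hy.prop, fun z hz hlt => hlt.not_ge (hy.le_of_ge hz hlt.le)⟩, hxy⟩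

theorem minSet_union_eq {B M : Finset P} (hB : B.Nonempty) (hBa : IsAntichainF P B)
    (hBM : ∀ b ∈ B, ∀ m ∈ M, b < m) : minSet P (B ∪ M) = B := by
  obtain ⟨b₀, hb₀⟩ := hB
  ext x
  simp only [minSet, mem_filter, mem_union]
  constructor
  · rintro ⟨hx | hx, hmin⟩
    · exact hx
    · exact absurd (hBM b₀ hb₀ x hx) (hmin b₀ (Or.inl hb₀))
  · refine fun hx => ⟨Or.inl hx, fun y hy hyx => ?_⟩
    rcases hy with hy | hy
    · exact hBa hy hx hyx.ne hyx.le
    · exact lt_asymm hyx (hBM x hx y hy)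

end Extremal

@[simp]
theorem mem_level {P : Type*} [Fintype P] {r : P → ℕ} {i : ℕ} {x : P} :
    x ∈ level P r i ↔ r x = i := by
  simp [level]

section Ranked

variable {P : Type*} [Fintype P] [PartialOrder P] {r : P → ℕ}

theorem isAntichainF_of_subset_level (hr : StrictMono r) {S : Finset P} {i : ℕ}
    (hS : S ⊆ level P r i) : IsAntichainF P S := by
  intro x hx y hy hxy hle
  have := hr (lt_of_le_of_ne hle hxy)
  simp [mem_level.1 (hS hx), mem_level.1 (hS hy)] at this

theorem forall_lt_of_subset_level (hr : ∀ x y : P, x < y ↔ r x < r y) {S T : Finset P}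
    {i i' : ℕ} (hS : S ⊆ level P r i) (hT : T ⊆ level P r i') (hi : i < i') :
    ∀ s ∈ S, ∀ t ∈ T, s < t := fun s hs t ht =>
  (hr s t).2 (by rwa [mem_level.1 (hS hs), mem_level.1 (hT ht)])

theorem forall_exists_le_of_subset_level (hr : ∀ x y : P, x < y ↔ r x < r y) {j : ℕ}
    (hL : (level P r j).Nonempty) {T : Finset P} (hT : T ⊆ level P r (j + 1)) :
    ∀ t ∈ T, ∀ y < t, ∃ l ∈ level P r j, y ≤ l := by
  intro t ht y hyt
  have hy : r y < j + 1 := mem_level.1 (hT ht) ▸ (hr y t).1 hyt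
  rcases (Nat.lt_succ_iff.1 hy).eq_or_lt with hyj | hyj
  · exact ⟨y, mem_level.2 hyj, le_rfl⟩
  · obtain ⟨l, hl⟩ := hL
    exact ⟨l, hl, ((hr y l).2 (mem_level.1 hl ▸ hyj)).le⟩

theorem mem_iff_of_maxSet_subset_level (hr : ∀ x y : P, x < y ↔ r x < r y) {K : Finset P}
    {k : ℕ} (hK : IsIdealF P K) (hM : maxSet P K ⊆ level P r k) (hMne : (maxSet P K).Nonempty)
    {x : P} : x ∈ K ↔ x ∈ maxSet P K ∨ r x < k := by
  constructor
  · intro hx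
    obtain ⟨y, hy, hxy⟩ := exists_le_mem_maxSet hx
    rcases hxy.eq_or_lt with rfl | hlt
    · exact Or.inl hy
    · exact Or.inr (mem_level.1 (hM hy) ▸ (hr x y).1 hlt)
  · rintro (hx | hx)
    · exact mem_of_mem_filter x hx
    · obtain ⟨m, hm⟩ := hMne
      exact hK (mem_of_mem_filter m hm) ((hr x m).2 (mem_level.1 (hM hm) ▸ hx)).le

theorem sdiff_eq_erase_level_union (hr : ∀ x y : P, x < y ↔ r x < r y) {J K : Finset P}
    (hJ : IsIdealF P J) (hK : IsIdealF P K) {a : P} {j : ℕ} (ha : maxSet P J = {a})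
    (hJmax : maxSet P J ⊆ level P r j) (hKmax : maxSet P K ⊆ level P r (j + 1))
    (hKne : (maxSet P K).Nonempty) :
    K \ J = (level P r j).erase a ∪ maxSet P K := by
  have hra : r a = j := mem_level.1 (hJmax (ha ▸ mem_singleton_self a))
  ext x
  have hx : x ∈ maxSet P K → r x = j + 1 := fun h => mem_level.1 (hKmax h)
  rw [mem_sdiff, mem_iff_of_maxSet_subset_level hr hK hKmax hKne,
    mem_iff_of_maxSet_subset_level hr hJ hJmax (ha ▸ singleton_nonempty a), ha]
  simp only [mem_singleton, mem_union, mem_erase, mem_level]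
  grind

end Ranked

theorem case3_mem_DeltaStarC
    (r : P → ℕ) (n : ℕ) (hr : IsMaxRanked P r n)
    (J K : Finset P) (hJ : IsIdealF P J) (hK : IsIdealF P K)
    (hcKJ : ConnIn P (↑(K \ J)))
    (hmaxJ : (maxSet P J).card = 1) (hmaxK : 2 ≤ (maxSet P K).card)
    (j k : ℕ) (hkj : k = j + 1)
    (hj : maxSet P J ⊆ level P r j) (hk : maxSet P K ⊆ level P r k) :
    minSet P (K \ J) = level P r (k - 1) \ maxSet P J ∧
    IsAntichainF P (level P r (k - 1)) ∧ IsAntichainF P (minSet P (K \ J)) ∧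
      IsAntichainF P (maxSet P K) ∧
    level P r (k - 1) ≠ minSet P (K \ J) ∧ level P r (k - 1) ≠ maxSet P K ∧
      minSet P (K \ J) ≠ maxSet P K ∧
    ({level P r (k - 1), minSet P (K \ J), maxSet P K} : Finset (Finset P)) ∈
      DeltaStarC P := by
  obtain ⟨-, -, hr⟩ := hr
  have hmono : StrictMono r := fun x y => (hr x y).1
  subst hkj
  obtain ⟨a, ha⟩ := card_eq_one.1 hmaxJ
  have haL : a ∈ level P r j := hj (ha ▸ mem_singleton_self a)
  have hMne : (maxSet P K).Nonempty := card_pos.1 (by omega)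
  have hL : IsAntichainF P (level P r j) := isAntichainF_of_subset_level hmono subset_rfl
  have hM : IsAntichainF P (maxSet P K) := isAntichainF_of_subset_level hmono hk
  have hLM := forall_lt_of_subset_level hr subset_rfl hk (Nat.lt_succ_self j)
  have hBM : ∀ b ∈ (level P r j).erase a, ∀ m ∈ maxSet P K, b < m := fun b hb =>
    hLM b (mem_of_mem_erase hb)
  have hKJ := sdiff_eq_erase_level_union hr hJ hK ha hj hk hMne
  have hB := nonempty_of_connIn_union (hKJ ▸ hcKJ) hM hmaxK
  have hmin : minSet P (K \ J) = (level P r j).erase a :=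
    hKJ ▸ minSet_union_eq hB (hL.mono (erase_subset a _)) hBM
  rw [Nat.add_sub_cancel, hmin, ha, sdiff_singleton_eq_erase]
  exact ⟨rfl, hL, hL.mono (erase_subset a _), hM, (erase_ne_self.2 haL).symm,
    ne_of_forall_lt ⟨a, haL⟩ hLM, ne_of_forall_lt hB hBM,
    mem_DeltaStarC_of_forall_lt haL hB hL hM hmaxK hLM
      (forall_exists_le_of_subset_level hr ⟨a, haL⟩ hk)⟩
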